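/- For n >= 5, in any collection of g = (n-1)(n-2)/2 vectors in Z^{C(n,2)} each of which is the signed characteristic vector of an oriented triangle of K_n, if the collection is linearly independent and all pairwise inner products are nonpositive, then a contradiction follows; i.e., no such collection forms a basis of the flow lattice of K_n with pairwise nonpositive inner products. -/

import Mathlib

open Matrix

/-- The signed characteristic vector of the directed edge `(x, y)`, with coordinates
indexed by the edges of the complete graph `K_n` (ordered pairs `p` with `p.1 < p.2`,
oriented from the smaller to the larger endpoint). -/
def dirVec (n : ℕ) (x y : Fin n) : {p : Fin n × Fin n // p.1 < p.2} → ℤ :=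
  fun e => if e.1 = (x, y) then 1 else if e.1 = (y, x) then -1 else 0

/-- The signed characteristic vector of the oriented triangle `a → b → c → a`. -/
def triVec (n : ℕ) (a b c : Fin n) : {p : Fin n × Fin n // p.1 < p.2} → ℤ :=
  fun e => dirVec n a b e + dirVec n b c e + dirVec n c a e

/-!
Two distinct triangles sharing two edges have the same vertex set, hence equal or opposite
vectors. So if two triangles of the family had the same sign on a common edge, their nonpositive
inner product would force a second common edge, which is impossible: every edge `e` lies in at
most two triangles of the family, with opposite signs, and `(∑ i, f i e)² + ∑ i, (f i e)² ≤ 2`.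
Summing over the `C(n, 2)` edges, with `‖f i‖² = 3`, the flow `S = ∑ i, f i` satisfies
`‖S‖² ≤ 2 C(n, 2) - 3 C(n - 1, 2) ≤ 2` once `n ≥ 5`. But `S ≠ 0` by linear independence, and a
nonzero integer flow must leave both endpoints of an edge of its support through further edges,
so it is supported on at least three edges and `‖S‖² ≥ 3`.
-/

open Finset

section DotProduct

variable {ι R : Type*} [Fintype ι] [DecidableEq ι]

lemma exists_ne_mul_neg_of_dotProduct_nonpos [CommRing R] [LinearOrder R]
    [IsStrictOrderedRing R] {x y : ι → R} (h : x ⬝ᵥ y ≤ 0) {i : ι} (hi : 0 < x i * y i) :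
    ∃ j ≠ i, x j * y j < 0 := by
  by_contra! hrest
  have : 0 ≤ ∑ j ∈ univ.erase i, x j * y j :=
    sum_nonneg fun j hj => hrest j (ne_of_mem_erase hj)
  rw [dotProduct, ← add_sum_erase _ _ (mem_univ i)] at h
  linarith

lemma exists_ne_mul_ne_zero_of_dotProduct_eq_zero [NonUnitalNonAssocSemiring R]
    {x y : ι → R} (h : x ⬝ᵥ y = 0) {i : ι} (hi : x i * y i ≠ 0) :
    ∃ j ≠ i, x j * y j ≠ 0 := by
  rw [dotProduct, ← add_sum_erase _ _ (mem_univ i)] at h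
  obtain ⟨j, hj, hxy⟩ := exists_ne_zero_of_sum_ne_zero fun h0 => hi (by rwa [h0, add_zero] at h)
  exact ⟨j, ne_of_mem_erase hj, hxy⟩

end DotProduct

lemma card_support_le_dotProduct_self {E : Type*} [Fintype E] (x : E → ℤ) :
    (#{e | x e ≠ 0} : ℤ) ≤ x ⬝ᵥ x := by
  rw [natCast_card_filter, dotProduct]
  refine sum_le_sum fun e _ => ?_
  split_ifs with he
  · have := mul_self_pos.2 he; omega
  · exact mul_self_nonneg _

lemma sum_mul_sum_add_sum_mul_self_le_two {ι : Type*} [Fintype ι] {x : ι → ℤ}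
    (hx : ∀ i, x i = 1 ∨ x i = 0 ∨ x i = -1) (hprod : ∀ i j, i ≠ j → x i * x j ≤ 0) :
    (∑ i, x i) * (∑ i, x i) + ∑ i, x i * x i ≤ 2 := by
  have hsum : ∑ i, x i = #{i | x i = 1} - #{i | x i = -1} := by
    rw [natCast_card_filter, natCast_card_filter, ← sum_sub_distrib]
    refine sum_congr rfl fun i _ => ?_
    rcases hx i with h | h | h <;> simp [h]
  have hsq : ∑ i, x i * x i = #{i | x i = 1} + #{i | x i = -1} := by
    rw [natCast_card_filter, natCast_card_filter, ← sum_add_distrib]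
    refine sum_congr rfl fun i _ => ?_
    rcases hx i with h | h | h <;> simp [h]
  have hle : ∀ s : ℤ, s * s = 1 → #{i | x i = s} ≤ 1 := fun s hs =>
    card_le_one.2 fun i hi j hj => by
      by_contra hij
      have := hprod i j hij
      simp only [mem_filter, mem_univ, true_and] at hi hj
      rw [hi, hj] at this
      omega
  have h1 := hle 1 rfl
  have h2 := hle (-1) rfl
  rw [hsum, hsq]
  interval_cases #{i | x i = 1} <;> interval_cases #{i | x i = -1} <;> norm_num

lemma sum_dotProduct_sum_add_le {ι E : Type*} [Fintype ι] [Fintype E] (f : ι → E → ℤ)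
    (hval : ∀ i e, f i e = 1 ∨ f i e = 0 ∨ f i e = -1)
    (hprod : ∀ i j, i ≠ j → ∀ e, f i e * f j e ≤ 0) :
    (∑ i, f i) ⬝ᵥ (∑ i, f i) + ∑ i, f i ⬝ᵥ f i ≤ 2 * Fintype.card E := by
  calc (∑ i, f i) ⬝ᵥ (∑ i, f i) + ∑ i, f i ⬝ᵥ f i
      = ∑ e, ((∑ i, f i e) * (∑ i, f i e) + ∑ i, f i e * f i e) := by
        simp only [dotProduct, sum_add_distrib, Finset.sum_apply]
        rw [sum_comm (γ := ι)]
    _ ≤ ∑ _e : E, 2 := sum_le_sum fun e _ =>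
        sum_mul_sum_add_sum_mul_self_le_two (fun i => hval i e) fun i j hij => hprod i j hij e
    _ = 2 * Fintype.card E := by simp [mul_comm]

lemma sum_ne_zero_of_linearIndependent {ι R M : Type*} [Fintype ι] [Nonempty ι] [Ring R]
    [Nontrivial R] [AddCommGroup M] [Module R M] {f : ι → M} (hf : LinearIndependent R f) :
    ∑ i, f i ≠ 0 := by
  intro h
  exact one_ne_zero <|
    Fintype.linearIndependent_iff.1 hf (fun _ => 1) (by simpa using h) (Classical.arbitrary ι)

lemma two_mul_choose_two_le {n : ℕ} (hn : 5 ≤ n) :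
    2 * n.choose 2 ≤ 3 * ((n - 1) * (n - 2) / 2) + 2 := by
  obtain ⟨m, rfl⟩ := Nat.exists_eq_add_of_le' hn
  rw [Nat.choose_two_right, show m + 5 - 1 = m + 4 by omega, show m + 5 - 2 = m + 3 by omega]
  have h1 : (m + 5) * (m + 4) / 2 * 2 = (m + 5) * (m + 4) :=
    Nat.div_mul_cancel (Nat.even_mul_pred_self (m + 5)).two_dvd
  have h2 : (m + 4) * (m + 3) / 2 * 2 = (m + 4) * (m + 3) :=
    Nat.div_mul_cancel (Nat.even_mul_pred_self (m + 4)).two_dvd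
  nlinarith

abbrev Edge (n : ℕ) := {p : Fin n × Fin n // p.1 < p.2}

lemma card_edge (n : ℕ) : Fintype.card (Edge n) = n.choose 2 := by
  rw [Fintype.card_subtype, Fintype.card_product_filter_lt, Fintype.card_fin]

section Edges

variable {n : ℕ}

lemma Edge.exists_endpoint_ne :
    ∀ {e e' : Edge n}, e ≠ e' → ∃ w, (w = e'.1.1 ∨ w = e'.1.2) ∧ w ≠ e.1.1 ∧ w ≠ e.1.2 := by
  rintro ⟨⟨u, v⟩, huv⟩ ⟨⟨u', v'⟩, huv'⟩ h
  by_contra! hw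
  have h1 := hw u' (Or.inl rfl)
  have h2 := hw v' (Or.inr rfl)
  simp only [ne_eq, Subtype.mk.injEq, Prod.mk.injEq, Fin.ext_iff, Fin.lt_def] at h h1 h2 huv huv'
  omega

lemma Edge.endpoints_eq_of_card_eq_three {e e' : Edge n} (hee' : e ≠ e') {T : Finset (Fin n)}
    (hT : #T = 3) (hsub : {e.1.1, e.1.2, e'.1.1, e'.1.2} ⊆ T) :
    {e.1.1, e.1.2, e'.1.1, e'.1.2} = T := by
  refine eq_of_subset_of_card_le hsub (hT ▸ ?_)
  obtain ⟨w, hw, hw1, hw2⟩ := Edge.exists_endpoint_ne hee'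
  calc 3 = #{e.1.1, e.1.2, w} := (card_eq_three.2 ⟨_, _, _, e.2.ne, hw1.symm, hw2.symm, rfl⟩).symm
    _ ≤ _ := card_le_card (by rcases hw with rfl | rfl <;> simp [insert_subset_iff])

lemma Edge.eq_of_endpoints {e e' : Edge n} (h1 : e'.1.1 = e.1.1 ∨ e'.1.2 = e.1.1)
    (h2 : e'.1.1 = e.1.2 ∨ e'.1.2 = e.1.2) : e' = e := by
  have := e.2
  have := e'.2
  simp only [Fin.lt_def, Fin.ext_iff] at *
  exact Subtype.ext (Prod.ext (Fin.ext (by omega)) (Fin.ext (by omega)))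

end Edges

section Triangle

variable {n : ℕ}

lemma dirVec_swap (x y : Fin n) : dirVec n y x = -dirVec n x y := by
  funext ⟨⟨u, v⟩, huv⟩
  simp only [dirVec, Pi.neg_apply, Prod.mk.injEq, Fin.ext_iff, Fin.lt_def] at huv ⊢
  split_ifs <;> omega

lemma dirVec_dotProduct_of_lt {x y : Fin n} (h : x < y) (w : Edge n → ℤ) :
    dirVec n x y ⬝ᵥ w = w ⟨(x, y), h⟩ := by
  have : dirVec n x y = Pi.single ⟨(x, y), h⟩ 1 := by
    funext ⟨⟨u, v⟩, huv⟩
    simp only [dirVec, Pi.single_apply, Subtype.mk.injEq, Prod.mk.injEq, Fin.ext_iff,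
      Fin.lt_def] at huv h ⊢
    split_ifs <;> omega
  rw [this, single_dotProduct, one_mul]

lemma dirVec_dotProduct_of_gt {x y : Fin n} (h : y < x) (w : Edge n → ℤ) :
    dirVec n x y ⬝ᵥ w = -w ⟨(y, x), h⟩ := by
  rw [dirVec_swap, neg_dotProduct, dirVec_dotProduct_of_lt]

lemma dirVec_dotProduct_dirVec {x y : Fin n} (hxy : x ≠ y) (u w : Fin n) :
    dirVec n x y ⬝ᵥ dirVec n u w =
      if (u, w) = (x, y) then 1 else if (u, w) = (y, x) then -1 else 0 := by
  rcases hxy.lt_or_gt with h | h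
  · rw [dirVec_dotProduct_of_lt h]
    simp only [dirVec]
    split_ifs <;> simp_all [Prod.ext_iff, Fin.ext_iff]
  · rw [dirVec_dotProduct_of_gt h]
    simp only [dirVec]
    split_ifs <;> simp_all [Prod.ext_iff, Fin.ext_iff]

variable {a b c a' b' c' : Fin n}

lemma triVec_eq_add (a b c : Fin n) :
    triVec n a b c = dirVec n a b + dirVec n b c + dirVec n c a :=
  rfl

lemma triVec_rotate (a b c : Fin n) : triVec n a b c = triVec n b c a := by
  funext e
  simp only [triVec]
  ring

lemma triVec_swap (a b c : Fin n) : triVec n a c b = -triVec n a b c := by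
  funext e
  simp only [triVec, Pi.neg_apply, congrFun (dirVec_swap c a) e, congrFun (dirVec_swap b c) e,
    congrFun (dirVec_swap a b) e]
  ring

lemma triVec_dotProduct_self (hab : a ≠ b) (hbc : b ≠ c) (hac : a ≠ c) :
    triVec n a b c ⬝ᵥ triVec n a b c = 3 := by
  simp only [triVec_eq_add, add_dotProduct, dotProduct_add, dirVec_dotProduct_dirVec hab,
    dirVec_dotProduct_dirVec hbc, dirVec_dotProduct_dirVec hac.symm]
  norm_num [hab, hbc, hac, hab.symm, hbc.symm, hac.symm]

lemma triVec_apply_eq (a b c : Fin n) (e : Edge n) :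
    triVec n a b c e = 1 ∨ triVec n a b c e = 0 ∨ triVec n a b c e = -1 := by
  obtain ⟨⟨u, v⟩, huv⟩ := e
  simp only [Fin.lt_def] at huv
  simp only [triVec, dirVec, Prod.mk.injEq, Fin.ext_iff]
  split_ifs <;> omega

lemma endpoints_mem_of_triVec_apply_ne_zero {e : Edge n} (h : triVec n a b c e ≠ 0) :
    e.1.1 ∈ ({a, b, c} : Finset (Fin n)) ∧ e.1.2 ∈ ({a, b, c} : Finset (Fin n)) := by
  obtain ⟨⟨u, v⟩, huv⟩ := e
  simp only [triVec, dirVec, Prod.mk.injEq] at h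
  simp only [mem_insert, mem_singleton]
  split_ifs at h <;> simp_all

lemma triVec_eq_or_eq_neg_of_vertices_eq (hab : a' ≠ b') (hbc : b' ≠ c') (hac : a' ≠ c')
    (h : ({a', b', c'} : Finset (Fin n)) = {a, b, c}) :
    triVec n a' b' c' = triVec n a b c ∨ triVec n a' b' c' = -triVec n a b c := by
  have hmem : ∀ x ∈ ({a', b', c'} : Finset (Fin n)), x = a ∨ x = b ∨ x = c := by
    simp [h]
  obtain ⟨ha | ha | ha, hb | hb | hb, hc | hc | hc⟩ :=
    And.intro (hmem a' (by simp)) (And.intro (hmem b' (by simp)) (hmem c' (by simp)))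
  all_goals subst ha hb hc
  all_goals first
    | contradiction
    | grind [triVec_rotate, triVec_swap]

lemma triVec_eq_or_eq_neg_of_apply_ne_zero (hab : a ≠ b) (hbc : b ≠ c) (hac : a ≠ c)
    (hab' : a' ≠ b') (hbc' : b' ≠ c') (hac' : a' ≠ c') {e e' : Edge n} (hee' : e ≠ e')
    (he : triVec n a b c e * triVec n a' b' c' e ≠ 0)
    (he' : triVec n a b c e' * triVec n a' b' c' e' ≠ 0) :
    triVec n a' b' c' = triVec n a b c ∨ triVec n a' b' c' = -triVec n a b c := by
  refine triVec_eq_or_eq_neg_of_vertices_eq hab' hbc' hac' ?_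
  rw [mul_ne_zero_iff] at he he'
  obtain ⟨h1, h2⟩ := endpoints_mem_of_triVec_apply_ne_zero he.1
  obtain ⟨h3, h4⟩ := endpoints_mem_of_triVec_apply_ne_zero he'.1
  obtain ⟨h1', h2'⟩ := endpoints_mem_of_triVec_apply_ne_zero he.2
  obtain ⟨h3', h4'⟩ := endpoints_mem_of_triVec_apply_ne_zero he'.2
  rw [← Edge.endpoints_eq_of_card_eq_three hee' (card_eq_three.2 ⟨_, _, _, hab, hac, hbc, rfl⟩)
      (by simp [insert_subset_iff, *]),
    Edge.endpoints_eq_of_card_eq_three hee' (card_eq_three.2 ⟨_, _, _, hab', hac', hbc', rfl⟩)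
      (by simp [insert_subset_iff, *])]

lemma triVec_apply_mul_apply_nonpos (hab : a ≠ b) (hbc : b ≠ c) (hac : a ≠ c)
    (hab' : a' ≠ b') (hbc' : b' ≠ c') (hac' : a' ≠ c') (hne : triVec n a' b' c' ≠ triVec n a b c)
    (hnp : triVec n a b c ⬝ᵥ triVec n a' b' c' ≤ 0) (e : Edge n) :
    triVec n a b c e * triVec n a' b' c' e ≤ 0 := by
  by_contra! hpos
  obtain ⟨e', hee', hneg⟩ := exists_ne_mul_neg_of_dotProduct_nonpos hnp hpos
  rcases triVec_eq_or_eq_neg_of_apply_ne_zero hab hbc hac hab' hbc' hac' hee'.symm hpos.ne'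
    hneg.ne with h | h
  · exact hne h
  · rw [h, Pi.neg_apply, mul_neg] at hpos
    nlinarith [mul_self_nonneg (triVec n a b c e)]

end Triangle

def incidenceMatrix (n : ℕ) : Matrix (Fin n) (Edge n) ℤ :=
  Matrix.of fun v e => (if e.1.1 = v then 1 else 0) - (if e.1.2 = v then 1 else 0)

def flowLattice (n : ℕ) : Submodule ℤ (Edge n → ℤ) :=
  LinearMap.ker (incidenceMatrix n).mulVecLin

section Flow

variable {n : ℕ} {a b c : Fin n}

lemma mem_flowLattice_iff {S : Edge n → ℤ} :
    S ∈ flowLattice n ↔ ∀ v, incidenceMatrix n v ⬝ᵥ S = 0 := by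
  simp [flowLattice, funext_iff, mulVec]

lemma incidenceMatrix_apply_ne_zero_iff {v : Fin n} {e : Edge n} :
    incidenceMatrix n v e ≠ 0 ↔ e.1.1 = v ∨ e.1.2 = v := by
  have := e.2.ne
  simp only [incidenceMatrix, of_apply]
  split_ifs <;> simp_all

lemma dirVec_dotProduct_incidenceMatrix {x y : Fin n} (hxy : x ≠ y) (v : Fin n) :
    dirVec n x y ⬝ᵥ incidenceMatrix n v = (if x = v then 1 else 0) - (if y = v then 1 else 0) := by
  rcases hxy.lt_or_gt with h | h
  · simp [dirVec_dotProduct_of_lt h, incidenceMatrix]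
  · simp [dirVec_dotProduct_of_gt h, incidenceMatrix]

lemma triVec_mem_flowLattice (hab : a ≠ b) (hbc : b ≠ c) (hac : a ≠ c) :
    triVec n a b c ∈ flowLattice n := by
  refine mem_flowLattice_iff.2 fun v => ?_
  rw [dotProduct_comm, triVec_eq_add]
  simp only [add_dotProduct, dirVec_dotProduct_incidenceMatrix hab,
    dirVec_dotProduct_incidenceMatrix hbc, dirVec_dotProduct_incidenceMatrix hac.symm]
  ring

lemma exists_ne_apply_ne_zero_of_mem_flowLattice {S : Edge n → ℤ} (hS : S ∈ flowLattice n)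
    {e : Edge n} (he : S e ≠ 0) {v : Fin n} (hv : e.1.1 = v ∨ e.1.2 = v) :
    ∃ e' ≠ e, S e' ≠ 0 ∧ (e'.1.1 = v ∨ e'.1.2 = v) := by
  obtain ⟨e', hne, h⟩ := exists_ne_mul_ne_zero_of_dotProduct_eq_zero (mem_flowLattice_iff.1 hS v)
    (mul_ne_zero (incidenceMatrix_apply_ne_zero_iff.2 hv) he)
  rw [mul_ne_zero_iff, incidenceMatrix_apply_ne_zero_iff] at h
  exact ⟨e', hne, h.2, h.1⟩

lemma three_le_dotProduct_self_of_mem_flowLattice {S : Edge n → ℤ} (hS : S ∈ flowLattice n)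
    (h0 : S ≠ 0) : 3 ≤ S ⬝ᵥ S := by
  obtain ⟨e, he : S e ≠ 0⟩ := Function.ne_iff.1 h0
  obtain ⟨e₁, he₁, hS₁, hv₁⟩ := exists_ne_apply_ne_zero_of_mem_flowLattice hS he (Or.inl rfl)
  obtain ⟨e₂, he₂, hS₂, hv₂⟩ := exists_ne_apply_ne_zero_of_mem_flowLattice hS he (Or.inr rfl)
  have he₁₂ : e₁ ≠ e₂ := by
    rintro rfl
    exact he₁ (Edge.eq_of_endpoints hv₁ hv₂)
  calc (3 : ℤ) = #{e, e₁, e₂} := by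
        rw [card_eq_three.2 ⟨e, e₁, e₂, he₁.symm, he₂.symm, he₁₂, rfl⟩]; rfl
    _ ≤ #{e | S e ≠ 0} := by
        gcongr
        simp [insert_subset_iff, he, hS₁, hS₂]
    _ ≤ S ⬝ᵥ S := card_support_le_dotProduct_self S

end Flow

/-- For `n ≥ 5`, no collection of `g = (n-1)(n-2)/2` signed characteristic vectors of
oriented triangles of `K_n` is linearly independent with pairwise nonpositive inner
products; i.e. `K_n` admits no circuit `M`-basis consisting entirely of triangles. -/
theorem stmt_12 (n g : ℕ) (hn : 5 ≤ n) (hg : g = (n - 1) * (n - 2) / 2)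
    (f : Fin g → ({p : Fin n × Fin n // p.1 < p.2} → ℤ))
    (htri : ∀ i, ∃ a b c : Fin n, a ≠ b ∧ b ≠ c ∧ a ≠ c ∧ f i = triVec n a b c)
    (hli : LinearIndependent ℤ f)
    (hnp : ∀ i j, i ≠ j → f i ⬝ᵥ f j ≤ 0) :
    False := by
  choose a b c hab hbc hac hf using htri
  have : Nonempty (Fin g) :=
    ⟨0, hg ▸ Nat.div_pos (Nat.mul_le_mul (by omega : 2 ≤ n - 1) (by omega : 1 ≤ n - 2)) two_pos⟩
  have hsign : ∀ i j, i ≠ j → ∀ e, f i e * f j e ≤ 0 := fun i j hij => by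
    have hne := hli.injective.ne hij.symm
    have hdot := hnp i j hij
    rw [hf i, hf j] at hne hdot ⊢
    exact triVec_apply_mul_apply_nonpos (hab i) (hbc i) (hac i) (hab j) (hbc j) (hac j) hne hdot
  have hbound := sum_dotProduct_sum_add_le f (fun i => hf i ▸ triVec_apply_eq _ _ _) hsign
  have hnorm : ∑ i, f i ⬝ᵥ f i = 3 * g := by
    simp [hf, triVec_dotProduct_self, hab, hbc, hac, mul_comm]
  have hflow : ∑ i, f i ∈ flowLattice n :=
    Submodule.sum_mem _ fun i _ => hf i ▸ triVec_mem_flowLattice (hab i) (hbc i) (hac i)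
  have hS :=
    three_le_dotProduct_self_of_mem_flowLattice hflow (sum_ne_zero_of_linearIndependent hli)
  have hcount := hg ▸ two_mul_choose_two_le hn
  rw [hnorm, card_edge] at hbound
  omega
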